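/- arXiv:1303.5145 — 2 statements merged into one kernel-verified Lean document; each statement's English description precedes it below -/
import Mathlib

section
/- Let Θ be a symmetric p×p real matrix and let λ₁, λ₂ ≥ 0. Then λ₁ Σ_{i,j} |Θ_{ij}| + λ₂ Ω₁(Θ − diag(Θ)) = λ₁ Σ_{i=1}^p |Θ_{ii}| + (λ₁ + λ₂/2) Σ_{i ≠ j} |Θ_{ij}|; that is, for q = 1 the CNJGL penalty amounts to an ℓ₁ penalty of λ₁ on the diagonal elements and λ₁ + λ₂/2 on the off-diagonal elements. -/
open Matrix
open scoped ENNReal BigOperators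

/-- The ℓ_q norm of a finitely-indexed real vector, for q ∈ [0,∞]
(the maximum absolute entry when q = ∞). -/
noncomputable def lqNorm (q : ℝ≥0∞) {ι : Type*} [Fintype ι] (x : ι → ℝ) : ℝ :=
  ‖(WithLp.equiv q (ι → ℝ)).symm x‖

/-- The row-column overlap norm Ω_q of a K-tuple of p×p real matrices:
the infimum of Σ_j ‖([V¹;…;Vᴷ])_j‖_q over all decompositions Θᵏ = Vᵏ + (Vᵏ)ᵀ. -/
noncomputable def rcon (q : ℝ≥0∞) (K p : ℕ)
    (Θ : Fin K → Matrix (Fin p) (Fin p) ℝ) : ℝ :=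
  sInf { r : ℝ | ∃ V : Fin K → Matrix (Fin p) (Fin p) ℝ,
    (∀ k, Θ k = V k + (V k)ᵀ) ∧
    r = ∑ j : Fin p, lqNorm q (fun ki : Fin K × Fin p => V ki.1 ki.2 j) }

/-- The row-column overlap norm Ω_q of a single p×p matrix (the case K = 1). -/
noncomputable def rcon1 (q : ℝ≥0∞) {p : ℕ} (Θ : Matrix (Fin p) (Fin p) ℝ) : ℝ :=
  sInf { r : ℝ | ∃ V : Matrix (Fin p) (Fin p) ℝ,
    Θ = V + Vᵀ ∧ r = ∑ j : Fin p, lqNorm q (fun i => V i j) }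

lemma lq1 {ι : Type*} [Fintype ι] (x : ι → ℝ) : lqNorm 1 x = ∑ i, |x i| := by
  unfold lqNorm
  rw [PiLp.norm_eq_sum (by norm_num)]
  simp [Real.norm_eq_abs]

lemma rcon1_one {p : ℕ} (A : Matrix (Fin p) (Fin p) ℝ) (hA : A.IsSymm) :
    rcon1 1 A = (∑ i : Fin p, ∑ j : Fin p, |A i j|) / 2 := by
  unfold rcon1
  have hmem : ((∑ i : Fin p, ∑ j : Fin p, |A i j|) / 2) ∈
      { r : ℝ | ∃ V : Matrix (Fin p) (Fin p) ℝ,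
        A = V + Vᵀ ∧ r = ∑ j : Fin p, lqNorm 1 (fun i => V i j) } := by
    refine ⟨(1/2 : ℝ) • A, ?_, ?_⟩
    · ext i j
      have := congrFun (congrFun hA i) j
      simp [Matrix.transpose_apply] at this ⊢
      linarith
    · simp only [lq1]
      rw [Finset.sum_comm]
      rw [Finset.sum_div]
      congr 1; ext i
      rw [Finset.sum_div]
      congr 1; ext j
      simp [Matrix.smul_apply, abs_mul, abs_of_nonneg]
      ring
  have hlb : ∀ r ∈ { r : ℝ | ∃ V : Matrix (Fin p) (Fin p) ℝ,
        A = V + Vᵀ ∧ r = ∑ j : Fin p, lqNorm 1 (fun i => V i j) },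
      (∑ i : Fin p, ∑ j : Fin p, |A i j|) / 2 ≤ r := by
    rintro r ⟨V, hV, rfl⟩
    simp only [lq1]
    have key : ∑ i : Fin p, ∑ j : Fin p, |A i j| ≤
        2 * ∑ j : Fin p, ∑ i : Fin p, |V i j| := by
      have h1 : ∀ i j, |A i j| ≤ |V i j| + |V j i| := by
        intro i j
        have : A i j = V i j + V j i := by
          have := congrFun (congrFun hV i) j
          simpa [Matrix.add_apply, Matrix.transpose_apply] using this
        rw [this]; exact abs_add_le _ _
      calc ∑ i : Fin p, ∑ j : Fin p, |A i j|
          ≤ ∑ i : Fin p, ∑ j : Fin p, (|V i j| + |V j i|) := by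
            apply Finset.sum_le_sum; intro i _
            exact Finset.sum_le_sum fun j _ => h1 i j
        _ = 2 * ∑ j : Fin p, ∑ i : Fin p, |V i j| := by
            simp only [Finset.sum_add_distrib]
            rw [two_mul, Finset.sum_comm]
    linarith
  exact le_antisymm (csInf_le ⟨_, hlb⟩ hmem) (le_csInf ⟨_, hmem⟩ hlb)

/-- For a symmetric p×p real matrix Θ and λ₁, λ₂ ≥ 0,
λ₁ Σ_{i,j} |Θ_{ij}| + λ₂ Ω₁(Θ − diag(Θ))
  = λ₁ Σ_i |Θ_{ii}| + (λ₁ + λ₂/2) Σ_{i ≠ j} |Θ_{ij}|. -/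
theorem cnjgl_penalty_q_one (p : ℕ) (Θ : Matrix (Fin p) (Fin p) ℝ)
    (hΘ : Θ.IsSymm) (lam₁ lam₂ : ℝ) (hlam₁ : 0 ≤ lam₁) (hlam₂ : 0 ≤ lam₂) :
    lam₁ * (∑ i : Fin p, ∑ j : Fin p, |Θ i j|)
        + lam₂ * rcon1 1 (Θ - Matrix.diagonal fun i => Θ i i)
      = lam₁ * (∑ i : Fin p, |Θ i i|)
        + (lam₁ + lam₂ / 2) *
          ∑ i : Fin p, ∑ j : Fin p, (if i ≠ j then |Θ i j| else 0) := by
  set A := Θ - Matrix.diagonal fun i => Θ i i with hAdef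
  have hA : A.IsSymm := hΘ.sub (Matrix.isSymm_diagonal _)
  have hAij : ∀ i j, |A i j| = if i ≠ j then |Θ i j| else 0 := by
    intro i j
    by_cases h : i = j
    · simp [hAdef, h, Matrix.sub_apply, Matrix.diagonal_apply]
    · simp [hAdef, h, Matrix.sub_apply, Matrix.diagonal_apply]
  have hr : rcon1 1 A = (∑ i : Fin p, ∑ j : Fin p,
      (if i ≠ j then |Θ i j| else 0)) / 2 := by
    rw [rcon1_one A hA]
    congr 1
    exact Finset.sum_congr rfl fun i _ => Finset.sum_congr rfl fun j _ => hAij i j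
  have hsplit : ∑ i : Fin p, ∑ j : Fin p, |Θ i j|
      = (∑ i : Fin p, |Θ i i|)
        + ∑ i : Fin p, ∑ j : Fin p, (if i ≠ j then |Θ i j| else 0) := by
    rw [← Finset.sum_add_distrib]
    refine Finset.sum_congr rfl fun i _ => ?_
    have : ∑ j : Fin p, |Θ i j|
        = ∑ j : Fin p, ((if i = j then |Θ i j| else 0)
            + (if i ≠ j then |Θ i j| else 0)) := by
      refine Finset.sum_congr rfl fun j _ => ?_
      by_cases h : i = j <;> simp [h]
    rw [this, Finset.sum_add_distrib, Finset.sum_ite_eq]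
    simp
  rw [hr, hsplit]
  ring
end

section
/- Let q ∈ [1,∞] and let s ∈ [1,∞] be its conjugate exponent (1/q + 1/s = 1). For all symmetric p×p real matrices Θ¹,…,Θᴷ, the row-column overlap norm has the dual representation Ω_q(Θ¹,…,Θᴷ) = sup { Σ_{k=1}^K trace((Λᵏ)ᵀ Θᵏ) : Λ¹,…,Λᴷ ∈ ℝ^{p×p} such that for every column index j ∈ {1,…,p}, the ℓ_s norm of the jth column of the stacked (Kp)×p matrix [Λ¹+(Λ¹)ᵀ; … ; Λᴷ+(Λᴷ)ᵀ] is at most 1 }. -/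
/-!
Weak duality: if `Θᵏ = Vᵏ + (Vᵏ)ᵀ`, then `Σₖ ⟨Λᵏ, Θᵏ⟩ = Σₖ ⟨Λᵏ + (Λᵏ)ᵀ, Vᵏ⟩`, and Hölder's
inequality, applied column by column to the stacked matrices, bounds this by
`Σⱼ ‖([V¹;…;Vᴷ])ⱼ‖_q` as soon as every stacked column of `[Λ¹+(Λ¹)ᵀ; …]` has `ℓ_s` norm `≤ 1`.

Strong duality: `X ↦ Ω_q(X¹ + (X¹)ᵀ, …)` is sublinear, so Hahn–Banach gives a linear functional
`g` below it with `g(Θ/2) = Ω_q(Θ)`. Since `g` vanishes on antisymmetric tuples, its matrix `M` is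
symmetric, and since `g` is also below `Σⱼ ‖·ⱼ‖_q`, the converse of Hölder's inequality bounds the
`ℓ_s` norm of every stacked column of `M` by `1`. Then `Λ = M / 2` has `Λ + Λᵀ = M` and attains
`Ω_q(Θ)`.
-/

open Matrix
open scoped ENNReal BigOperators

section LqNorm

variable {ι : Type*} [Fintype ι] {q s : ℝ≥0∞}

lemma lqNorm_eq_norm_toLp (q : ℝ≥0∞) (x : ι → ℝ) : lqNorm q x = ‖WithLp.toLp q x‖ := rfl

lemma lqNorm_eq_rpow_sum (hq : 0 < q.toReal) (x : ι → ℝ) :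
    lqNorm q x = (∑ i, |x i| ^ q.toReal) ^ (1 / q.toReal) := by
  simp [lqNorm_eq_norm_toLp, PiLp.norm_eq_sum hq]

lemma lqNorm_one (x : ι → ℝ) : lqNorm 1 x = ∑ i, |x i| := by
  simp [lqNorm_eq_rpow_sum (q := 1) (by simp)]

lemma lqNorm_top (x : ι → ℝ) : lqNorm ∞ x = ‖x‖ := PiLp.norm_toLp x

section NormedSpace

variable [Fact (1 ≤ q)]

lemma lqNorm_nonneg (x : ι → ℝ) : 0 ≤ lqNorm q x := norm_nonneg _

lemma lqNorm_zero : lqNorm q (0 : ι → ℝ) = 0 := by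
  simp [lqNorm_eq_norm_toLp]

lemma lqNorm_add_le (x y : ι → ℝ) : lqNorm q (x + y) ≤ lqNorm q x + lqNorm q y :=
  norm_add_le (WithLp.toLp q x) (WithLp.toLp q y)

lemma lqNorm_smul (c : ℝ) (x : ι → ℝ) : lqNorm q (c • x) = |c| * lqNorm q x :=
  norm_smul c (WithLp.toLp q x)

lemma abs_le_lqNorm (x : ι → ℝ) (i : ι) : |x i| ≤ lqNorm q x :=
  PiLp.norm_apply_le (WithLp.toLp q x) i

lemma lqNorm_single [DecidableEq ι] (i : ι) (a : ℝ) : lqNorm q (Pi.single i a) = |a| :=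
  PiLp.norm_single q (fun _ => ℝ) i a

lemma dotProduct_le_lqNorm_one_mul (m x : ι → ℝ) : m ⬝ᵥ x ≤ lqNorm 1 m * lqNorm q x := by
  rw [lqNorm_one, Finset.sum_mul]
  refine Finset.sum_le_sum fun i _ => ?_
  calc m i * x i ≤ |m i| * |x i| := (le_abs_self _).trans (abs_mul _ _).le
    _ ≤ |m i| * lqNorm q x := by gcongr; exact abs_le_lqNorm x i

end NormedSpace

lemma abs_sign_le_one (a : ℝ) : |(SignType.sign a : ℝ)| ≤ 1 := by
  rcases lt_trichotomy a 0 with h | h | h <;> simp [h]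

theorem dotProduct_le_lqNorm_mul_lqNorm [q.HolderConjugate s] (m x : ι → ℝ) :
    m ⬝ᵥ x ≤ lqNorm s m * lqNorm q x := by
  rcases eq_or_ne q ∞ with rfl | hq
  · obtain rfl : s = 1 := (ENNReal.HolderConjugate.eq_top_iff_eq_one ∞ s).mp rfl
    exact dotProduct_le_lqNorm_one_mul m x
  rcases eq_or_ne s ∞ with rfl | hs
  · obtain rfl : q = 1 := (ENNReal.HolderConjugate.eq_top_iff_eq_one ∞ q).mp rfl
    rw [dotProduct_comm, mul_comm]
    exact dotProduct_le_lqNorm_one_mul x m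
  have hqs := ENNReal.HolderConjugate.toReal_of_ne_top hs hq
  rw [lqNorm_eq_rpow_sum hqs.pos, lqNorm_eq_rpow_sum hqs.symm.pos]
  exact Real.inner_le_Lp_mul_Lq Finset.univ m x hqs

lemma lqNorm_le_one_of_forall_dotProduct_le_of_ne_top [q.HolderConjugate s] (hq : q ≠ ∞)
    (hs : s ≠ ∞) (m : ι → ℝ) (hm : ∀ x, m ⬝ᵥ x ≤ lqNorm q x) : lqNorm s m ≤ 1 := by
  have hqs := ENNReal.HolderConjugate.toReal_of_ne_top hq hs
  set r := q.toReal
  set t := s.toReal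
  have rpow_mul_pow (a : ℝ) (n : ℕ) (hn : t - 2 + n ≠ 0) :
      |a| ^ (t - 2) * |a| ^ n = |a| ^ (t - 2 + n) :=
    (Real.rpow_add_natCast' (abs_nonneg a) hn).symm
  -- the extremal vector of Hölder's inequality, `sign (m i) * |m i| ^ (t - 1)`
  set x : ι → ℝ := fun i => m i * |m i| ^ (t - 2)
  have hmx (i : ι) : m i * x i = |m i| ^ t := by
    calc m i * x i = |m i| ^ (t - 2) * |m i| ^ 2 := by rw [sq_abs]; ring
      _ = |m i| ^ t := by rw [rpow_mul_pow _ 2 (by norm_num [hqs.symm.ne_zero])]; norm_num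
  have hx (i : ι) : |x i| ^ r = |m i| ^ t := by
    calc |x i| ^ r = (|m i| ^ (t - 2) * |m i| ^ 1) ^ r := by
          rw [abs_mul, abs_of_nonneg (Real.rpow_nonneg (abs_nonneg (m i)) _), pow_one, mul_comm]
      _ = |m i| ^ t := by
          rw [rpow_mul_pow _ 1 (by norm_num; linarith [hqs.symm.lt]), Nat.cast_one,
            show t - 2 + 1 = t - 1 by ring, ← Real.rpow_mul (abs_nonneg _),
            hqs.symm.sub_one_mul_conj]
  set A := ∑ i, |m i| ^ t
  have hA : A ≤ A ^ (1 / r) := by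
    calc A = m ⬝ᵥ x := Finset.sum_congr rfl fun i _ => (hmx i).symm
      _ ≤ lqNorm q x := hm x
      _ = A ^ (1 / r) := by
          rw [lqNorm_eq_rpow_sum hqs.pos]
          exact congrArg (· ^ (1 / r)) (Finset.sum_congr rfl fun i _ => hx i)
  have hA1 : A ≤ 1 := by
    by_contra! h
    exact (Real.rpow_lt_self_of_one_lt h ((div_lt_one hqs.pos).2 hqs.lt)).not_ge hA
  rw [lqNorm_eq_rpow_sum hqs.symm.pos]
  exact Real.rpow_le_one (by positivity) hA1 (by positivity)

theorem lqNorm_le_one_of_forall_dotProduct_le [q.HolderConjugate s] (m : ι → ℝ)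
    (hm : ∀ x, m ⬝ᵥ x ≤ lqNorm q x) : lqNorm s m ≤ 1 := by
  rcases eq_or_ne q ∞ with rfl | hq
  · obtain rfl : s = 1 := (ENNReal.HolderConjugate.eq_top_iff_eq_one ∞ s).mp rfl
    calc lqNorm 1 m = m ⬝ᵥ fun i => (SignType.sign (m i) : ℝ) := by
          simp [lqNorm_one, dotProduct, self_mul_sign]
      _ ≤ _ := hm _
      _ ≤ 1 := by
          rw [lqNorm_top]
          exact (pi_norm_le_iff_of_nonneg zero_le_one).mpr fun i => abs_sign_le_one (m i)
  rcases eq_or_ne s ∞ with rfl | hs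
  · obtain rfl : q = 1 := (ENNReal.HolderConjugate.eq_top_iff_eq_one ∞ q).mp rfl
    classical
    rw [lqNorm_top]
    refine (pi_norm_le_iff_of_nonneg zero_le_one).mpr fun i => ?_
    calc ‖m i‖ = m ⬝ᵥ Pi.single i (SignType.sign (m i) : ℝ) := by
          rw [dotProduct_single, self_mul_sign, Real.norm_eq_abs]
      _ ≤ _ := hm _
      _ ≤ 1 := by rw [lqNorm_single]; exact abs_sign_le_one (m i)
  exact lqNorm_le_one_of_forall_dotProduct_le_of_ne_top hq hs m hm

end LqNorm

lemma Matrix.trace_transpose_mul_eq_sum {m n R : Type*} [Fintype m] [Fintype n] [CommSemiring R]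
    (A B : Matrix m n R) : (Aᵀ * B).trace = ∑ i, ∑ j, A i j * B i j := by
  rw [trace_mul_comm, ← sum_hadamard_eq]
  simp only [hadamard_apply, mul_comm]

lemma LinearMap.apply_eq_sum_trace_transpose_mul {ι m n R : Type*} [Fintype ι] [DecidableEq ι]
    [Fintype m] [DecidableEq m] [Fintype n] [DecidableEq n] [CommSemiring R]
    (g : (ι → Matrix m n R) →ₗ[R] R) (V : ι → Matrix m n R) :
    g V = ∑ k,
      ((of fun i j => g (Pi.single k (Matrix.single i j 1)) : Matrix m n R)ᵀ * V k).trace := by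
  have hV : V = ∑ k, ∑ i, ∑ j, V k i j • Pi.single k (Matrix.single i j (1 : R)) := by
    conv_lhs => rw [← Finset.univ_sum_single V]
    refine Finset.sum_congr rfl fun k _ => ?_
    conv_lhs => rw [matrix_eq_sum_single (V k)]
    simp only [← LinearMap.single_apply R, map_sum, ← map_smul, smul_single, smul_eq_mul, mul_one]
  conv_lhs => rw [hV]
  simp only [map_sum, map_smul, trace_transpose_mul_eq_sum, smul_eq_mul, of_apply, mul_comm]

theorem exists_linearMap_le_and_eq {E : Type*} [AddCommGroup E] [Module ℝ E] (N : E → ℝ)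
    (N_hom : ∀ c : ℝ, 0 < c → ∀ x, N (c • x) = c * N x) (N_add : ∀ x y, N (x + y) ≤ N x + N y)
    (x : E) : ∃ g : E →ₗ[ℝ] ℝ, (∀ y, g y ≤ N y) ∧ g x = N x := by
  have N_zero : N 0 = 0 := by
    have := N_hom 2 two_pos 0
    rw [smul_zero] at this
    linarith
  have mul_le (c : ℝ) : c * N x ≤ N (c • x) := by
    rcases lt_trichotomy c 0 with hc | rfl | hc
    · have := N_add (c • x) ((-c) • x)
      rw [← add_smul, add_neg_cancel, zero_smul, N_zero, N_hom _ (neg_pos.2 hc)] at this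
      linarith
    · simp [N_zero]
    · exact (N_hom c hc x).ge
  have H (c : ℝ) (hc : c • x = 0) : c • N x = 0 := by
    have h₁ := mul_le c
    have h₂ := mul_le (-c)
    rw [hc, N_zero] at h₁
    rw [neg_smul, hc, neg_zero, N_zero] at h₂
    rw [smul_eq_mul]
    linarith
  let f : E →ₗ.[ℝ] ℝ := LinearPMap.mkSpanSingleton' x (N x) H
  obtain ⟨g, hg_ext, hg_le⟩ := exists_extension_of_le_sublinear f N N_hom N_add (by
      rintro ⟨y, hy⟩
      obtain ⟨c, rfl⟩ := Submodule.mem_span_singleton.mp hy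
      rw [LinearPMap.mkSpanSingleton'_apply, smul_eq_mul]
      exact mul_le c)
  have hx : x ∈ f.domain := by
    rw [LinearPMap.domain_mkSpanSingleton]
    exact Submodule.mem_span_singleton_self x
  exact ⟨g, hg_le, (hg_ext ⟨x, hx⟩).trans (LinearPMap.mkSpanSingleton'_apply_self x (N x) H hx)⟩

section StackedColumns

variable {K p : ℕ}

def stackedCol (V : Fin K → Matrix (Fin p) (Fin p) ℝ) (j : Fin p) : Fin K × Fin p → ℝ :=
  fun ki => V ki.1 ki.2 j

noncomputable def colNormSum (q : ℝ≥0∞) (V : Fin K → Matrix (Fin p) (Fin p) ℝ) : ℝ :=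
  ∑ j, lqNorm q (stackedCol V j)

def addTranspose :
    (Fin K → Matrix (Fin p) (Fin p) ℝ) →ₗ[ℝ] (Fin K → Matrix (Fin p) (Fin p) ℝ) where
  toFun V k := V k + (V k)ᵀ
  map_add' V W := by
    funext k
    simp only [Pi.add_apply, transpose_add]
    abel
  map_smul' c V := by
    funext k
    simp only [Pi.smul_apply, transpose_smul, smul_add, RingHom.id_apply]

@[simp]
lemma addTranspose_apply (V : Fin K → Matrix (Fin p) (Fin p) ℝ) (k : Fin K) :
    addTranspose V k = V k + (V k)ᵀ :=
  rfl

lemma addTranspose_half_smul {Θ : Fin K → Matrix (Fin p) (Fin p) ℝ} (hΘ : ∀ k, (Θ k).IsSymm) :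
    addTranspose ((1 / 2 : ℝ) • Θ) = Θ := by
  funext k
  rw [addTranspose_apply, Pi.smul_apply, transpose_smul, hΘ k, ← add_smul]
  norm_num

lemma sum_trace_transpose_mul_eq_sum_dotProduct (Λ W : Fin K → Matrix (Fin p) (Fin p) ℝ) :
    ∑ k, ((Λ k)ᵀ * W k).trace = ∑ j, stackedCol Λ j ⬝ᵥ stackedCol W j := by
  simp only [trace_transpose_mul_eq_sum, dotProduct, stackedCol, Fintype.sum_prod_type]
  exact (Finset.sum_congr rfl fun k _ => Finset.sum_comm).trans Finset.sum_comm

lemma sum_trace_transpose_mul_addTranspose (Λ V : Fin K → Matrix (Fin p) (Fin p) ℝ) :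
    ∑ k, ((Λ k)ᵀ * addTranspose V k).trace = ∑ k, ((addTranspose Λ k)ᵀ * V k).trace := by
  refine Finset.sum_congr rfl fun k _ => ?_
  simp only [addTranspose_apply, mul_add, add_mul, transpose_add, transpose_transpose, trace_add,
    trace_transpose_mul]

lemma le_rcon {q : ℝ≥0∞} {Θ : Fin K → Matrix (Fin p) (Fin p) ℝ} {c : ℝ}
    (hΘ : ∃ V, Θ = addTranspose V) (h : ∀ V, Θ = addTranspose V → c ≤ colNormSum q V) : c ≤ rcon q K p Θ := by
  obtain ⟨V, hV⟩ := hΘ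
  exact le_csInf ⟨_, V, funext_iff.mp hV, rfl⟩ fun _ ⟨W, hW, hr⟩ => hr ▸ h W (funext hW)

section NormBounds

variable {q : ℝ≥0∞} [Fact (1 ≤ q)]

lemma colNormSum_nonneg (V : Fin K → Matrix (Fin p) (Fin p) ℝ) : 0 ≤ colNormSum q V :=
  Finset.sum_nonneg fun _ _ => lqNorm_nonneg _

lemma colNormSum_zero : colNormSum q (0 : Fin K → Matrix (Fin p) (Fin p) ℝ) = 0 :=
  Finset.sum_eq_zero fun _ _ => lqNorm_zero

lemma colNormSum_add_le (V W : Fin K → Matrix (Fin p) (Fin p) ℝ) :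
    colNormSum q (V + W) ≤ colNormSum q V + colNormSum q W :=
  (Finset.sum_le_sum fun _ _ => lqNorm_add_le _ _).trans_eq Finset.sum_add_distrib

lemma colNormSum_smul (c : ℝ) (V : Fin K → Matrix (Fin p) (Fin p) ℝ) :
    colNormSum q (c • V) = |c| * colNormSum q V :=
  (Finset.sum_congr rfl fun _ _ => lqNorm_smul c _).trans (Finset.mul_sum _ _ _).symm

lemma rcon_le_colNormSum {Θ V : Fin K → Matrix (Fin p) (Fin p) ℝ} (hV : Θ = addTranspose V) :
    rcon q K p Θ ≤ colNormSum q V :=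
  csInf_le ⟨0, by rintro _ ⟨W, -, rfl⟩; exact colNormSum_nonneg W⟩ ⟨V, funext_iff.mp hV, rfl⟩

lemma rcon_addTranspose_add_le (X Y : Fin K → Matrix (Fin p) (Fin p) ℝ) :
    rcon q K p (addTranspose (X + Y)) ≤
      rcon q K p (addTranspose X) + rcon q K p (addTranspose Y) := by
  rw [← sub_le_iff_le_add]
  refine le_rcon ⟨X, rfl⟩ fun V hV => ?_
  rw [sub_le_comm]
  refine le_rcon ⟨Y, rfl⟩ fun W hW => ?_
  have : rcon q K p (addTranspose (X + Y)) ≤ colNormSum q (V + W) :=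
    rcon_le_colNormSum (by rw [map_add, map_add, hV, hW])
  linarith [colNormSum_add_le (q := q) V W]

lemma rcon_smul_le {c : ℝ} (hc : 0 < c) {Θ : Fin K → Matrix (Fin p) (Fin p) ℝ}
    (hΘ : ∃ V, Θ = addTranspose V) : rcon q K p (c • Θ) ≤ c * rcon q K p Θ := by
  rw [← div_le_iff₀' hc]
  refine le_rcon hΘ fun V hV => ?_
  rw [div_le_iff₀' hc]
  calc rcon q K p (c • Θ) ≤ colNormSum q (c • V) := rcon_le_colNormSum (by rw [hV, map_smul])
    _ = c * colNormSum q V := by rw [colNormSum_smul, abs_of_pos hc]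

lemma rcon_addTranspose_smul {c : ℝ} (hc : 0 < c) (X : Fin K → Matrix (Fin p) (Fin p) ℝ) :
    rcon q K p (addTranspose (c • X)) = c * rcon q K p (addTranspose X) := by
  refine le_antisymm (map_smul addTranspose c X ▸ rcon_smul_le hc ⟨X, rfl⟩) ?_
  rw [← le_div_iff₀' hc, div_eq_inv_mul]
  simpa [inv_smul_smul₀ hc.ne'] using rcon_smul_le (inv_pos.2 hc) ⟨c • X, rfl⟩

end NormBounds

end StackedColumns

section Duality

variable {K p : ℕ} {q s : ℝ≥0∞} [q.HolderConjugate s]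

theorem sum_trace_le_colNormSum {Λ : Fin K → Matrix (Fin p) (Fin p) ℝ}
    (hΛ : ∀ j, lqNorm s (stackedCol (addTranspose Λ) j) ≤ 1)
    (V : Fin K → Matrix (Fin p) (Fin p) ℝ) :
    ∑ k, ((Λ k)ᵀ * addTranspose V k).trace ≤ colNormSum q V := by
  have : Fact (1 ≤ q) := ⟨ENNReal.HolderConjugate.one_le q s⟩
  rw [sum_trace_transpose_mul_addTranspose, sum_trace_transpose_mul_eq_sum_dotProduct]
  refine Finset.sum_le_sum fun j _ => ?_
  calc _ ≤ lqNorm s _ * lqNorm q _ := dotProduct_le_lqNorm_mul_lqNorm _ _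
    _ ≤ lqNorm q (stackedCol V j) := mul_le_of_le_one_left (lqNorm_nonneg _) (hΛ j)

theorem lqNorm_stackedCol_le_one {M : Fin K → Matrix (Fin p) (Fin p) ℝ}
    (hM : ∀ V, ∑ k, ((M k)ᵀ * V k).trace ≤ colNormSum q V) (j : Fin p) :
    lqNorm s (stackedCol M j) ≤ 1 := by
  classical
  have : Fact (1 ≤ q) := ⟨ENNReal.HolderConjugate.one_le q s⟩
  refine lqNorm_le_one_of_forall_dotProduct_le (q := q) _ fun x => ?_
  let cols : Fin p → Fin K × Fin p → ℝ := Pi.single j x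
  let V : Fin K → Matrix (Fin p) (Fin p) ℝ := fun k => of fun i j' => cols j' (k, i)
  have hV : ∀ j', stackedCol V j' = cols j' := fun _ => rfl
  calc stackedCol M j ⬝ᵥ x = ∑ j', stackedCol M j' ⬝ᵥ stackedCol V j' := by
        rw [Fintype.sum_eq_single j fun j' hj' => by simp [hV, cols, Pi.single_eq_of_ne hj']]
        simp [hV, cols]
    _ = ∑ k, ((M k)ᵀ * V k).trace := (sum_trace_transpose_mul_eq_sum_dotProduct M V).symm
    _ ≤ colNormSum q V := hM V
    _ = lqNorm q x := by
        rw [colNormSum, Fintype.sum_eq_single j fun j' hj' => by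
          simp [hV, cols, Pi.single_eq_of_ne hj', lqNorm_zero]]
        simp [hV, cols]

theorem exists_dual_certificate {Θ : Fin K → Matrix (Fin p) (Fin p) ℝ} (hΘ : ∀ k, (Θ k).IsSymm) :
    ∃ Λ : Fin K → Matrix (Fin p) (Fin p) ℝ,
      (∀ j, lqNorm s (stackedCol (addTranspose Λ) j) ≤ 1) ∧
      ∑ k, ((Λ k)ᵀ * Θ k).trace = rcon q K p Θ := by
  classical
  have : Fact (1 ≤ q) := ⟨ENNReal.HolderConjugate.one_le q s⟩
  obtain ⟨g, hg_le, hgX⟩ := exists_linearMap_le_and_eq (fun X => rcon q K p (addTranspose X))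
    (fun c hc X => rcon_addTranspose_smul hc X) rcon_addTranspose_add_le ((1 / 2 : ℝ) • Θ)
  set M : Fin K → Matrix (Fin p) (Fin p) ℝ := fun k => of fun i j => g (Pi.single k (single i j 1))
  have hgM := g.apply_eq_sum_trace_transpose_mul
  have hg_ker (Y) (hY : addTranspose Y = 0) : g Y ≤ 0 :=
    (hg_le Y).trans ((rcon_le_colNormSum (V := 0) (by rw [hY, map_zero])).trans_eq colNormSum_zero)
  have hM_symm (k : Fin K) : (M k).IsSymm := IsSymm.ext fun i j => by
    let Y : Fin K → Matrix (Fin p) (Fin p) ℝ := Pi.single k (single i j 1 - single j i 1)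
    have hY : addTranspose Y = 0 := by
      funext k'
      rcases eq_or_ne k' k with rfl | hk
      · simp [Y, transpose_single]
      · simp [Y, hk]
    have h₁ := hg_ker Y hY
    have h₂ := hg_ker (-Y) (by rw [map_neg, hY, neg_zero])
    simp only [Y, map_neg, Pi.single_sub, map_sub] at h₁ h₂
    show g _ = g _
    linarith
  have hM := addTranspose_half_smul hM_symm
  refine ⟨(1 / 2 : ℝ) • M, fun j => ?_, ?_⟩
  · rw [hM]
    exact lqNorm_stackedCol_le_one
      (fun V => (hgM V).symm ▸ (hg_le V).trans (rcon_le_colNormSum rfl)) j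
  · rw [← addTranspose_half_smul hΘ, sum_trace_transpose_mul_addTranspose, hM, ← hgM, hgX]

end Duality

theorem rcon_dual_representation_general (K p : ℕ) (q s : ℝ≥0∞)
    (hqs : q⁻¹ + s⁻¹ = 1)
    (Θ : Fin K → Matrix (Fin p) (Fin p) ℝ) (hΘ : ∀ k, (Θ k).IsSymm) :
    rcon q K p Θ =
      sSup { r : ℝ | ∃ Λ : Fin K → Matrix (Fin p) (Fin p) ℝ,
        (∀ j : Fin p,
          lqNorm s (fun ki : Fin K × Fin p => (Λ ki.1 + (Λ ki.1)ᵀ) ki.2 j) ≤ 1) ∧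
        r = ∑ k : Fin K, ((Λ k)ᵀ * Θ k).trace } := by
  have : q.HolderConjugate s := ENNReal.holderConjugate_iff.mpr hqs
  refine (IsGreatest.csSup_eq ⟨?_, ?_⟩).symm
  · obtain ⟨Λ, hΛ, hval⟩ := exists_dual_certificate (q := q) (s := s) hΘ
    exact ⟨Λ, hΛ, hval.symm⟩
  · rintro _ ⟨Λ, hΛ, rfl⟩
    exact le_rcon ⟨_, (addTranspose_half_smul hΘ).symm⟩ fun V hV =>
      hV ▸ sum_trace_le_colNormSum hΛ V

/-- Lemma 3, dual characterization of RCON: for q ∈ [1,∞] with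
conjugate exponent s (1/q + 1/s = 1) and symmetric p×p matrices Θ¹,…,Θᴷ,
Ω_q(Θ¹,…,Θᴷ) = sup { Σ_k ⟨Λᵏ, Θᵏ⟩ : every column of the stacked matrix
[Λ¹+(Λ¹)ᵀ; … ; Λᴷ+(Λᴷ)ᵀ] has ℓ_s norm at most 1 }. -/
theorem rcon_dual_representation (K p : ℕ) (q s : ℝ≥0∞)
    (hq : 1 ≤ q) (hqs : q⁻¹ + s⁻¹ = 1)
    (Θ : Fin K → Matrix (Fin p) (Fin p) ℝ) (hΘ : ∀ k, (Θ k).IsSymm) :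
    rcon q K p Θ =
      sSup { r : ℝ | ∃ Λ : Fin K → Matrix (Fin p) (Fin p) ℝ,
        (∀ j : Fin p,
          lqNorm s (fun ki : Fin K × Fin p => (Λ ki.1 + (Λ ki.1)ᵀ) ki.2 j) ≤ 1) ∧
        r = ∑ k : Fin K, ((Λ k)ᵀ * Θ k).trace } :=
  rcon_dual_representation_general K p q s hqs Θ hΘ
end
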